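/- arXiv:1906.10258 — 6 statements merged into one kernel-verified Lean document; each statement's English description precedes it below -/
import Mathlib

section
/- Let t₀ > 1 be a real number. Define g : ℝ → ℝ by g(0) = 0 and g(t) = t^(−1/2) for t ≥ 1, and define h(t) = t₀^(−1/2) − (1/2)·t₀^(−3/2)·(t − t₀) + t₀^(−2)·(t − t₀)². Then g(t) ≤ h(t) for t = 0 and for all real t ≥ 1. -/
/-- Lemma A.1 (Kitagawa–Tetenov): the quadratic `h` anchored at `t₀ > 1` majorizes
the extended inverse-square-root function `g` at `t = 0` and on `[1, ∞)`. -/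
theorem stmt_0 (t₀ : ℝ) (ht₀ : 1 < t₀) (g h : ℝ → ℝ)
    (hg0 : g 0 = 0)
    (hg1 : ∀ t : ℝ, 1 ≤ t → g t = t ^ (-(1/2) : ℝ))
    (hh : ∀ t : ℝ, h t = t₀ ^ (-(1/2) : ℝ) - (1/2) * t₀ ^ (-(3/2) : ℝ) * (t - t₀)
        + t₀ ^ (-(2 : ℝ)) * (t - t₀) ^ 2) :
    g 0 ≤ h 0 ∧ ∀ t : ℝ, 1 ≤ t → g t ≤ h t := by
  have htp : (0:ℝ) < t₀ := lt_trans zero_lt_one ht₀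
  set a := Real.sqrt t₀ with ha_def
  have ha1 : 1 < a := by
    rw [ha_def, show (1:ℝ) = Real.sqrt 1 by simp]
    exact Real.sqrt_lt_sqrt zero_le_one ht₀
  have hap : 0 < a := lt_trans zero_lt_one ha1
  have ha2 : a ^ 2 = t₀ := Real.sq_sqrt htp.le
  have hA1 : t₀ ^ (-(1/2) : ℝ) = a⁻¹ := by
    rw [Real.rpow_neg htp.le]
    congr 1
    rw [ha_def, Real.sqrt_eq_rpow]
  have hA3 : t₀ ^ (-(3/2) : ℝ) = (a ^ 3)⁻¹ := by
    rw [Real.rpow_neg htp.le]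
    congr 1
    rw [ha_def, Real.sqrt_eq_rpow, ← Real.rpow_natCast (t₀ ^ ((1:ℝ)/2)) 3,
      ← Real.rpow_mul htp.le]
    norm_num
  have hA4 : t₀ ^ (-(2:ℝ)) = (a ^ 4)⁻¹ := by
    rw [Real.rpow_neg htp.le]
    congr 1
    rw [ha_def, Real.sqrt_eq_rpow, ← Real.rpow_natCast (t₀ ^ ((1:ℝ)/2)) 4,
      ← Real.rpow_mul htp.le]
    norm_num
  constructor
  · rw [hg0, hh, hA1, hA3, hA4]
    have h1 : 0 ≤ a⁻¹ := inv_nonneg.mpr hap.le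
    have h2 : 0 ≤ (a ^ 3)⁻¹ := by positivity
    have h3 : 0 ≤ (a ^ 4)⁻¹ := by positivity
    nlinarith [mul_nonneg h2 htp.le, mul_nonneg h3 (sq_nonneg (0 - t₀))]
  · intro t ht
    have htp' : (0:ℝ) < t := lt_of_lt_of_le zero_lt_one ht
    set x := Real.sqrt t with hx_def
    have hx1 : 1 ≤ x := by
      rw [hx_def, show (1:ℝ) = Real.sqrt 1 by simp]
      exact Real.sqrt_le_sqrt ht
    have hxp : 0 < x := lt_of_lt_of_le zero_lt_one hx1
    have hx2 : x ^ 2 = t := Real.sq_sqrt htp'.le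
    have hB1 : t ^ (-(1/2) : ℝ) = x⁻¹ := by
      rw [Real.rpow_neg htp'.le]
      congr 1
      rw [hx_def, Real.sqrt_eq_rpow]
    rw [hg1 t ht, hh, hA1, hA3, hA4, hB1, ← hx2, ← ha2]
    have hcubic : 0 ≤ x ^ 3 + 2 * a * x ^ 2 + (a ^ 2 - a / 2) * x - a ^ 2 := by
      nlinarith [mul_le_mul_of_nonneg_left hx1 (sq_nonneg a), hx1, ha1.le,
        mul_pos hap hxp, sq_nonneg x]
    have key : 0 ≤ (x - a) ^ 2 * (x ^ 3 + 2 * a * x ^ 2 + (a ^ 2 - a / 2) * x - a ^ 2) :=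
      mul_nonneg (sq_nonneg _) hcubic
    rw [← sub_nonneg]
    have hiden : a⁻¹ - 1 / 2 * (a ^ 3)⁻¹ * (x ^ 2 - a ^ 2) + (a ^ 4)⁻¹ * (x ^ 2 - a ^ 2) ^ 2
        - x⁻¹
        = (x - a) ^ 2 * (x ^ 3 + 2 * a * x ^ 2 + (a ^ 2 - a / 2) * x - a ^ 2) / (x * a ^ 4) := by
      field_simp
      ring
    rw [hiden]
    exact div_nonneg key (by positivity)
end

section
/- Let X₁, …, Xₙ be independent {0,1}-valued random variables on a probability space with P(Xᵢ = 1) = pᵢ for each i, and set p̄ = (1/n)·∑ᵢ pᵢ. Define g : ℕ → ℝ by g(0) = 0 and g(t) = t^(−1/2) for t ≥ 1. If n·p̄ > 1, then E[g(∑_{i=1}^{n} Xᵢ)] < 2·(n·p̄)^(−1/2). -/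
/-!
Write `S = ∑ Xᵢ` and `m = ∑ pᵢ`. Since `Xᵢ` is independent of `S - Xᵢ` and `Xᵢ / (1 + S - Xᵢ) = Xᵢ / S`,
`m · E[1/(1+S)] ≤ ∑ pᵢ E[1/(1+S-Xᵢ)] = E[∑ Xᵢ / S] ≤ 1`.
As `g(k)² ≤ 2/(1+k)`, Jensen gives `E[g(S)]² ≤ E[g(S)²] ≤ 2/m < 4/m`.
-/

open MeasureTheory ProbabilityTheory Finset

lemma sum_natCast_mul_inv_one_add_sum_erase_le_one {ι : Type*} [Fintype ι] [DecidableEq ι]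
    (x : ι → ℕ) (hx : ∀ i, x i ≤ 1) :
    ∑ i, (x i : ℝ) * (1 + ∑ j ∈ univ.erase i, (x j : ℝ))⁻¹ ≤ 1 := by
  have hterm : ∀ i, (x i : ℝ) * (1 + ∑ j ∈ univ.erase i, (x j : ℝ))⁻¹
      = (x i : ℝ) * (∑ j, (x j : ℝ))⁻¹ := by
    intro i
    rcases Nat.le_one_iff_eq_zero_or_eq_one.1 (hx i) with h | h
    · simp [h]
    · rw [← add_sum_erase univ (fun j ↦ (x j : ℝ)) (mem_univ i), h, Nat.cast_one]
  simp_rw [hterm, ← sum_mul]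
  exact mul_inv_le_one

lemma Real.rpow_neg_half_sq {t : ℝ} (ht : 0 ≤ t) : (t ^ (-(1 / 2) : ℝ)) ^ 2 = t⁻¹ := by
  rw [← Real.rpow_natCast, ← Real.rpow_mul ht]
  norm_num [Real.rpow_neg_one]

lemma Real.rpow_neg_half_sq_le {t : ℝ} (ht : 1 ≤ t) :
    (t ^ (-(1 / 2) : ℝ)) ^ 2 ≤ 2 * (1 + t)⁻¹ := by
  rw [Real.rpow_neg_half_sq (by positivity), ← div_eq_mul_inv, inv_eq_one_div,
    div_le_div_iff₀ (by positivity) (by positivity)]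
  linarith

section Probability

variable {Ω : Type*} [MeasurableSpace Ω] {μ : Measure Ω}

lemma integral_natCast_eq_measureReal {X : Ω → ℕ} (hX : Measurable X) (h01 : ∀ ω, X ω ≤ 1) :
    ∫ ω, (X ω : ℝ) ∂μ = μ.real {ω | X ω = 1} := by
  have : (fun ω ↦ (X ω : ℝ)) = {ω | X ω = 1}.indicator 1 := by
    ext ω
    rcases Nat.le_one_iff_eq_zero_or_eq_one.1 (h01 ω) with h | h <;> simp [h]
  rw [this]
  exact integral_indicator_one (hX (measurableSet_singleton 1))

variable [IsProbabilityMeasure μ]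

lemma sq_integral_le_integral_sq {Y : Ω → ℝ} (hY : MemLp Y 2 μ) :
    (∫ ω, Y ω ∂μ) ^ 2 ≤ ∫ ω, Y ω ^ 2 ∂μ := by
  have := variance_nonneg Y μ
  rw [variance_eq_sub hY] at this
  simpa using this

lemma integrable_inv_one_add {Y : Ω → ℝ} (hY : Measurable Y) (h0 : ∀ ω, 0 ≤ Y ω) :
    Integrable (fun ω ↦ (1 + Y ω)⁻¹) μ := by
  refine .of_bound (by fun_prop) 1 (.of_forall fun ω ↦ ?_)
  rw [Real.norm_of_nonneg (inv_nonneg.2 (by linarith [h0 ω]))]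
  exact inv_le_one_of_one_le₀ (le_add_of_nonneg_right (h0 ω))

lemma sq_integral_comp_le_mul_integral_inv_one_add {Y : Ω → ℕ} (hY : Measurable Y) {f : ℕ → ℝ}
    {c : ℝ} (hf : ∀ k, f k ^ 2 ≤ c * (1 + (k : ℝ))⁻¹) :
    (∫ ω, f (Y ω) ∂μ) ^ 2 ≤ c * ∫ ω, (1 + (Y ω : ℝ))⁻¹ ∂μ := by
  have hc : 0 ≤ c := by simpa using (sq_nonneg _).trans (hf 0)
  have hfY : MemLp (fun ω ↦ f (Y ω)) 2 μ := by
    refine .of_bound (measurable_from_nat.comp hY).aestronglyMeasurable √c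
      (.of_forall fun ω ↦ Real.norm_eq_abs _ ▸ Real.abs_le_sqrt ((hf _).trans ?_))
    exact mul_le_of_le_one_right hc (inv_le_one_of_one_le₀ (by simp))
  calc (∫ ω, f (Y ω) ∂μ) ^ 2 ≤ ∫ ω, f (Y ω) ^ 2 ∂μ := sq_integral_le_integral_sq hfY
    _ ≤ ∫ ω, c * (1 + (Y ω : ℝ))⁻¹ ∂μ :=
      integral_mono hfY.integrable_sq
        ((integrable_inv_one_add (by fun_prop) fun _ ↦ by positivity).const_mul c)
        fun ω ↦ hf (Y ω)
    _ = c * ∫ ω, (1 + (Y ω : ℝ))⁻¹ ∂μ := integral_const_mul c _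

lemma integral_inv_one_add_sum_mul_sum_integral_le_one {ι : Type*} [Fintype ι]
    {X : ι → Ω → ℕ} (hmeas : ∀ i, Measurable (X i)) (h01 : ∀ i ω, X i ω ≤ 1)
    (hindep : iIndepFun X μ) :
    (∫ ω, (1 + ∑ i, (X i ω : ℝ))⁻¹ ∂μ) * ∑ i, ∫ ω, (X i ω : ℝ) ∂μ ≤ 1 := by
  classical
  have hmono : ∀ i, ∫ ω, (1 + ∑ j, (X j ω : ℝ))⁻¹ ∂μ
      ≤ ∫ ω, (1 + ∑ j ∈ univ.erase i, (X j ω : ℝ))⁻¹ ∂μ := by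
    refine fun i ↦ integral_mono (integrable_inv_one_add (by fun_prop) fun _ ↦ by positivity)
      (integrable_inv_one_add (by fun_prop) fun _ ↦ by positivity) fun ω ↦ ?_
    gcongr
    exact erase_subset i univ
  have hfactor : ∀ i, ∫ ω, (X i ω : ℝ) * (1 + ∑ j ∈ univ.erase i, (X j ω : ℝ))⁻¹ ∂μ
      = (∫ ω, (X i ω : ℝ) ∂μ) * ∫ ω, (1 + ∑ j ∈ univ.erase i, (X j ω : ℝ))⁻¹ ∂μ := by
    intro i
    have h := hindep.indepFun_finsetSum_of_notMem hmeas (notMem_erase i univ)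
    rw [sum_fn] at h
    exact_mod_cast h.symm.integral_fun_comp_mul_comp (f := Nat.cast)
      (g := fun k : ℕ ↦ (1 + (k : ℝ))⁻¹) (hmeas i).aemeasurable (by fun_prop)
      measurable_from_nat.aestronglyMeasurable measurable_from_nat.aestronglyMeasurable
  calc (∫ ω, (1 + ∑ i, (X i ω : ℝ))⁻¹ ∂μ) * ∑ i, ∫ ω, (X i ω : ℝ) ∂μ
      ≤ ∑ i, (∫ ω, (X i ω : ℝ) ∂μ) * ∫ ω, (1 + ∑ j ∈ univ.erase i, (X j ω : ℝ))⁻¹ ∂μ := by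
        rw [mul_sum]
        refine sum_le_sum fun i _ ↦ ?_
        rw [mul_comm]
        exact mul_le_mul_of_nonneg_left (hmono i) (integral_nonneg fun _ ↦ by positivity)
    _ = ∫ ω, ∑ i, (X i ω : ℝ) * (1 + ∑ j ∈ univ.erase i, (X j ω : ℝ))⁻¹ ∂μ := by
        rw [integral_finsetSum _ fun i _ ↦
          (integrable_inv_one_add (by fun_prop) fun _ ↦ by positivity).bdd_mul (c := 1)
            (by fun_prop) (.of_forall fun ω ↦ by simpa using h01 i ω)]
        simp_rw [hfactor]
    _ ≤ ∫ _, (1 : ℝ) ∂μ := by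
        refine integral_mono_of_nonneg (.of_forall fun ω ↦ by positivity) (integrable_const _)
          (.of_forall fun ω ↦ ?_)
        exact sum_natCast_mul_inv_one_add_sum_erase_le_one (X · ω) (h01 · ω)
    _ = 1 := by simp

end Probability

theorem stmt_1_general {Ω : Type*} [MeasurableSpace Ω] (μ : Measure Ω) [IsProbabilityMeasure μ]
    (n : ℕ) (X : Fin n → Ω → ℕ)
    (hmeas : ∀ i, Measurable (X i))
    (hval : ∀ i ω, X i ω = 0 ∨ X i ω = 1)
    (hindep : iIndepFun X μ)
    (p : Fin n → ℝ)
    (hp : ∀ i, (μ {ω | X i ω = 1}).toReal = p i)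
    (g : ℕ → ℝ) (hg0 : g 0 = 0)
    (hg1 : ∀ t : ℕ, 1 ≤ t → g t = (t : ℝ) ^ (-(1/2) : ℝ))
    (pbar : ℝ) (hpbar : pbar = (1 / n) * ∑ i, p i)
    (hlarge : 1 < n * pbar) :
    ∫ ω, g (∑ i, X i ω) ∂μ < 2 * (n * pbar) ^ (-(1/2) : ℝ) := by
  have h01 : ∀ i ω, X i ω ≤ 1 := fun i ω ↦ by rcases hval i ω with h | h <;> simp [h]
  have hn : (n : ℝ) ≠ 0 := by rintro h; norm_num [h] at hlarge
  have hm : (n : ℝ) * pbar = ∑ i, ∫ ω, (X i ω : ℝ) ∂μ := by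
    simp_rw [hpbar, integral_natCast_eq_measureReal (hmeas _) (h01 _), measureReal_def, hp]
    field_simp
  have hg : ∀ k : ℕ, g k ^ 2 ≤ 2 * (1 + (k : ℝ))⁻¹ := by
    rintro (_ | k)
    · simp [hg0]
    · simpa [hg1 _ k.succ_pos] using Real.rpow_neg_half_sq_le (t := k + 1) (by simp)
  have hkey := integral_inv_one_add_sum_mul_sum_integral_le_one hmeas h01 hindep
  rw [← hm] at hkey
  have hpos : 0 < (n : ℝ) * pbar := by linarith
  refine lt_of_pow_lt_pow_left₀ 2 (by positivity) ?_
  calc (∫ ω, g (∑ i, X i ω) ∂μ) ^ 2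
      ≤ 2 * ∫ ω, (1 + ∑ i, (X i ω : ℝ))⁻¹ ∂μ := by
        exact_mod_cast sq_integral_comp_le_mul_integral_inv_one_add (by fun_prop) hg
    _ ≤ 2 / (n * pbar) := by
        rw [← mul_one_div]
        gcongr
        rwa [le_div_iff₀ hpos]
    _ < 4 / (n * pbar) := by gcongr; norm_num
    _ = (2 * (n * pbar) ^ (-(1/2) : ℝ)) ^ 2 := by
        rw [mul_pow, Real.rpow_neg_half_sq hpos.le]
        ring

/-- For independent Bernoulli random variables `X i` with success probabilities `p i`,
if `n * p̄ > 1` then `E[g(∑ X i)] < 2 (n p̄)^{-1/2}` where `g 0 = 0` and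
`g t = t^{-1/2}` for `t ≥ 1`. -/
theorem stmt_1 {Ω : Type*} [MeasurableSpace Ω] (μ : Measure Ω) [IsProbabilityMeasure μ]
    (n : ℕ) (hn : 1 ≤ n) (X : Fin n → Ω → ℕ)
    (hmeas : ∀ i, Measurable (X i))
    (hval : ∀ i ω, X i ω = 0 ∨ X i ω = 1)
    (hindep : iIndepFun X μ)
    (p : Fin n → ℝ)
    (hp : ∀ i, (μ {ω | X i ω = 1}).toReal = p i)
    (g : ℕ → ℝ) (hg0 : g 0 = 0)
    (hg1 : ∀ t : ℕ, 1 ≤ t → g t = (t : ℝ) ^ (-(1/2) : ℝ))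
    (pbar : ℝ) (hpbar : pbar = (1 / n) * ∑ i, p i)
    (hlarge : 1 < n * pbar) :
    ∫ ω, g (∑ i, X i ω) ∂μ < 2 * (n * pbar) ^ (-(1/2) : ℝ) :=
  stmt_1_general μ n X hmeas hval hindep p hp g hg0 hg1 pbar hpbar hlarge
end

section
/- Let n ≥ 1, let L ≥ 0, and let φ₁, …, φₙ : ℝ → ℝ be L-Lipschitz functions with φᵢ(0) = 0 for every i. Let T ⊆ ℝⁿ be a nonempty bounded set and let A ⊆ {0,1}ⁿ be nonempty. Then (1/2)·2^(−n)·∑_{σ ∈ {−1,1}ⁿ} sup_{t ∈ T, α ∈ A} |(1/n)·∑_{i=1}^{n} σᵢ·φᵢ(tᵢ)·αᵢ| ≤ L·2^(−n)·∑_{σ ∈ {−1,1}ⁿ} sup_{t ∈ T, α ∈ A} |(1/n)·∑_{i=1}^{n} σᵢ·tᵢ·αᵢ|. -/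
open Finset

private lemma bddr {U : Type*} (f : U → ℝ) (M : ℝ) (h : ∀ u, f u ≤ M) :
    BddAbove (Set.range f) := ⟨M, by rintro x ⟨u, rfl⟩; exact h u⟩

/-- Per-coordinate two-point contraction lemma with positive parts. -/
private lemma two_point {U : Type*} [Nonempty U] (f ψ g : U → ℝ)
    (hb₁ : BddAbove (Set.range fun u => f u + g u))
    (hb₂ : BddAbove (Set.range fun u => f u - g u))
    (h1 : ∀ u, |ψ u| ≤ |g u|)
    (h2 : ∀ u v, |ψ u - ψ v| ≤ |g u - g v|) :
    max (sSup (Set.range fun u => f u + ψ u)) 0 +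
      max (sSup (Set.range fun u => f u - ψ u)) 0
    ≤ max (sSup (Set.range fun u => f u + g u)) 0 +
      max (sSup (Set.range fun u => f u - g u)) 0 := by
  set M₁ := sSup (Set.range fun u => f u + g u) with hM₁
  set M₂ := sSup (Set.range fun u => f u - g u) with hM₂
  set R := max M₁ 0 + max M₂ 0 with hRdef
  have hR0 : 0 ≤ R := add_nonneg (le_max_right _ _) (le_max_right _ _)
  have hMR : M₁ + M₂ ≤ R := add_le_add (le_max_left _ _) (le_max_left _ _)
  have hM₁' : ∀ u, f u + g u ≤ M₁ := fun u => le_csSup hb₁ ⟨u, rfl⟩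
  have hM₂' : ∀ u, f u - g u ≤ M₂ := fun u => le_csSup hb₂ ⟨u, rfl⟩
  set S₁ := sSup (Set.range fun u => f u + ψ u) with hS₁
  set S₂ := sSup (Set.range fun u => f u - ψ u) with hS₂
  have key : ∀ u, f u + |g u| ≤ max M₁ M₂ := by
    intro u
    rcases abs_cases (g u) with ⟨h, _⟩ | ⟨h, _⟩
    · rw [h]; exact le_max_of_le_left (hM₁' u)
    · rw [h]; exact le_max_of_le_right (by linarith [hM₂' u])
  have hmaxR : max M₁ M₂ ≤ R := by
    apply max_le
    · linarith [le_max_left M₁ (0:ℝ), le_max_right M₂ (0:ℝ)]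
    · linarith [le_max_left M₂ (0:ℝ), le_max_right M₁ (0:ℝ)]
  have hS₁R : S₁ ≤ R := by
    apply csSup_le (Set.range_nonempty _)
    rintro x ⟨u, rfl⟩
    show f u + ψ u ≤ R
    have hψu : ψ u ≤ |g u| := le_trans (le_abs_self _) (h1 u)
    linarith [key u, hmaxR]
  have hS₂R : S₂ ≤ R := by
    apply csSup_le (Set.range_nonempty _)
    rintro x ⟨u, rfl⟩
    show f u - ψ u ≤ R
    have hψu : -ψ u ≤ |g u| := le_trans (neg_le_abs _) (h1 u)
    linarith [key u, hmaxR]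
  have hsum : S₁ + S₂ ≤ M₁ + M₂ := by
    have h' : S₁ ≤ M₁ + M₂ - S₂ := by
      apply csSup_le (Set.range_nonempty _)
      rintro x ⟨u, rfl⟩
      show f u + ψ u ≤ M₁ + M₂ - S₂
      have h'' : S₂ ≤ M₁ + M₂ - (f u + ψ u) := by
        apply csSup_le (Set.range_nonempty _)
        rintro y ⟨v, rfl⟩
        show f v - ψ v ≤ M₁ + M₂ - (f u + ψ u)
        have hd : ψ u - ψ v ≤ |g u - g v| := le_trans (le_abs_self _) (h2 u v)
        rcases abs_cases (g u - g v) with ⟨h, _⟩ | ⟨h, _⟩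
        · rw [h] at hd; linarith [hM₁' u, hM₂' v]
        · rw [h] at hd; linarith [hM₁' v, hM₂' u]
      linarith
    linarith
  rcases le_total S₁ 0 with h₁ | h₁ <;> rcases le_total S₂ 0 with h₂ | h₂
  · rw [max_eq_right h₁, max_eq_right h₂]; linarith
  · rw [max_eq_right h₁, max_eq_left h₂]; linarith
  · rw [max_eq_left h₁, max_eq_right h₂]; linarith
  · rw [max_eq_left h₁, max_eq_left h₂]; linarith

/-- Pairing sums over sign vectors via a coordinate flip. -/
private lemma sum_flip_pair {n : ℕ} (a : Fin n) (F F' : (Fin n → Bool) → ℝ)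
    (h : ∀ σ, F' σ + F' (Function.update σ a (!σ a)) ≤
      F σ + F (Function.update σ a (!σ a))) :
    ∑ σ : Fin n → Bool, F' σ ≤ ∑ σ : Fin n → Bool, F σ := by
  classical
  have hinv : Function.Involutive (fun σ : Fin n → Bool => Function.update σ a (!σ a)) := by
    intro σ
    funext i
    by_cases hi : i = a
    · subst hi; simp [Function.update]
    · simp [Function.update, hi]
  set e := Function.Involutive.toPerm _ hinv with he
  have hF' : ∑ σ, F' (e σ) = ∑ σ, F' σ := Equiv.sum_comp e F'
  have hF : ∑ σ, F (e σ) = ∑ σ, F σ := Equiv.sum_comp e F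
  have h2 : ∑ σ, (F' σ + F' (e σ)) ≤ ∑ σ, (F σ + F (e σ)) :=
    Finset.sum_le_sum fun σ _ => h σ
  rw [Finset.sum_add_distrib, Finset.sum_add_distrib, hF', hF] at h2
  linarith

private lemma sg_flip (b : Bool) :
    (if !b then (1:ℝ) else -1) = -(if b then (1:ℝ) else -1) := by cases b <;> norm_num

private lemma sg_abs (b : Bool) : |if b then (1:ℝ) else -1| = 1 := by cases b <;> norm_num

/-- Main induction: replacing `g i` by `ψ i` coordinate by coordinate. -/
private lemma contraction {n : ℕ} {U : Type*} [Nonempty U]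
    (ψ g : Fin n → U → ℝ) (C : ℝ)
    (hψC : ∀ i u, |ψ i u| ≤ C) (hgC : ∀ i u, |g i u| ≤ C)
    (h1 : ∀ i u, |ψ i u| ≤ |g i u|)
    (h2 : ∀ i u v, |ψ i u - ψ i v| ≤ |g i u - g i v|) :
    ∑ σ : Fin n → Bool,
      max (sSup (Set.range fun u => ∑ i, (if σ i then (1:ℝ) else -1) * ψ i u)) 0
    ≤ ∑ σ : Fin n → Bool,
      max (sSup (Set.range fun u => ∑ i, (if σ i then (1:ℝ) else -1) * g i u)) 0 := by
  classical
  have main : ∀ S : Finset (Fin n),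
      ∑ σ : Fin n → Bool,
        max (sSup (Set.range fun u =>
          ∑ i, (if σ i then (1:ℝ) else -1) * (if i ∈ S then ψ i u else g i u))) 0
      ≤ ∑ σ : Fin n → Bool,
        max (sSup (Set.range fun u => ∑ i, (if σ i then (1:ℝ) else -1) * g i u)) 0 := by
    intro S
    induction S using Finset.induction_on with
    | empty => simp
    | @insert a S ha IH =>
      refine le_trans ?_ IH
      apply sum_flip_pair a
      intro σ
      -- decompose the sums
      set s : ℝ := if σ a then (1:ℝ) else -1 with hs
      set f : U → ℝ := fun u =>
        ∑ i ∈ Finset.univ.erase a, (if σ i then (1:ℝ) else -1) * (if i ∈ S then ψ i u else g i u)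
        with hf
      have hsabs : |s| = 1 := sg_abs (σ a)
      have hdec : ∀ (h' : Fin n → U → ℝ) (u : U),
          (∑ i, (if σ i then (1:ℝ) else -1) * (if i ∈ insert a S then ψ i u else g i u))
          = f u + s * (ψ a u) ∨ True := fun _ _ => Or.inr trivial
      -- actual decomposition lemmas
      have decomp : ∀ u : U,
          (∑ i, (if σ i then (1:ℝ) else -1) * (if i ∈ insert a S then ψ i u else g i u))
          = f u + s * ψ a u := by
        intro u
        rw [← Finset.add_sum_erase _ _ (Finset.mem_univ a)]
        rw [if_pos (Finset.mem_insert_self a S)]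
        rw [add_comm]
        congr 1
        apply Finset.sum_congr rfl
        intro i hi
        have hia : i ≠ a := (Finset.mem_erase.mp hi).1
        congr 1
        simp [Finset.mem_insert, hia]
      have decompS : ∀ u : U,
          (∑ i, (if σ i then (1:ℝ) else -1) * (if i ∈ S then ψ i u else g i u))
          = f u + s * g a u := by
        intro u
        rw [← Finset.add_sum_erase _ _ (Finset.mem_univ a)]
        rw [if_neg ha, add_comm]
      -- flip versions
      set σ' := Function.update σ a (!σ a) with hσ'
      have hσ'a : (if σ' a then (1:ℝ) else -1) = -s := by
        rw [hσ', Function.update_self]; exact sg_flip (σ a)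
      have hσ'i : ∀ i, i ≠ a → σ' i = σ i := fun i hi => Function.update_of_ne hi _ _
      have decomp' : ∀ u : U,
          (∑ i, (if σ' i then (1:ℝ) else -1) * (if i ∈ insert a S then ψ i u else g i u))
          = f u - s * ψ a u := by
        intro u
        rw [← Finset.add_sum_erase _ _ (Finset.mem_univ a)]
        rw [if_pos (Finset.mem_insert_self a S), hσ'a]
        rw [add_comm, neg_mul, ← sub_eq_add_neg]
        congr 1
        apply Finset.sum_congr rfl
        intro i hi
        have hia : i ≠ a := (Finset.mem_erase.mp hi).1
        rw [hσ'i i hia]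
        congr 1
        simp [Finset.mem_insert, hia]
      have decompS' : ∀ u : U,
          (∑ i, (if σ' i then (1:ℝ) else -1) * (if i ∈ S then ψ i u else g i u))
          = f u - s * g a u := by
        intro u
        rw [← Finset.add_sum_erase _ _ (Finset.mem_univ a)]
        rw [if_neg ha, hσ'a, add_comm, neg_mul, ← sub_eq_add_neg]
        congr 1
        exact Finset.sum_congr rfl fun i hi => by rw [hσ'i i (Finset.mem_erase.mp hi).1]
      simp only [funext decomp, funext decompS, funext decomp', funext decompS']
      -- bounds for bddAbove
      have hfb : ∀ u, |f u| ≤ (Finset.univ.erase a).card * C := by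
        intro u
        refine le_trans (Finset.abs_sum_le_sum_abs _ _) ?_
        rw [Finset.card_eq_sum_ones, Nat.cast_sum, Finset.sum_mul]
        apply Finset.sum_le_sum
        intro i _
        rw [abs_mul, sg_abs, one_mul, Nat.cast_one, one_mul]
        split_ifs
        · exact hψC i u
        · exact hgC i u
      have hC0 : 0 ≤ C := le_trans (abs_nonneg _) (hgC a Classical.ofNonempty)
      apply two_point (f := f) (ψ := fun u => s * ψ a u) (g := fun u => s * g a u)
      · apply bddr _ ((Finset.univ.erase a).card * C + C)
        intro u
        have := hfb u
        have h2' : |s * g a u| ≤ C := by rw [abs_mul, hsabs, one_mul]; exact hgC a u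
        have := le_abs_self (f u)
        have := le_abs_self (s * g a u)
        linarith [abs_le.mp (hfb u), abs_le.mp h2']
      · apply bddr _ ((Finset.univ.erase a).card * C + C)
        intro u
        have h2' : |s * g a u| ≤ C := by rw [abs_mul, hsabs, one_mul]; exact hgC a u
        linarith [abs_le.mp (hfb u), abs_le.mp h2']
      · intro u
        rw [abs_mul, abs_mul, hsabs, one_mul, one_mul]; exact h1 a u
      · intro u v
        rw [← mul_sub, ← mul_sub, abs_mul, abs_mul, hsabs, one_mul, one_mul]
        exact h2 a u v
  have := main Finset.univ
  simpa using this

private lemma sSup_range_mul {U : Type*} [Nonempty U] (L : ℝ) (hL : 0 ≤ L)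
    (h : U → ℝ) (M : ℝ) (hM : ∀ u, |h u| ≤ M) :
    sSup (Set.range fun u => L * h u) = L * sSup (Set.range h) := by
  rcases eq_or_lt_of_le hL with hL0 | hLpos
  · simp [← hL0]
  · apply le_antisymm
    · apply csSup_le (Set.range_nonempty _)
      rintro x ⟨u, rfl⟩
      have : h u ≤ sSup (Set.range h) :=
        le_csSup (bddr h M fun u => (abs_le.mp (hM u)).2) ⟨u, rfl⟩
      exact mul_le_mul_of_nonneg_left this hL
    · rw [mul_comm, ← le_div_iff₀ hLpos]
      apply csSup_le (Set.range_nonempty _)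
      rintro x ⟨u, rfl⟩
      rw [le_div_iff₀ hLpos, mul_comm]
      refine le_csSup ?_ ⟨u, rfl⟩
      apply bddr _ (L * M)
      intro v
      exact le_trans (le_abs_self _) (by
        rw [abs_mul, abs_of_nonneg hL]
        exact mul_le_mul_of_nonneg_left (hM v) hL)

/-- Extended Ledoux–Talagrand contraction inequality: for `L`-Lipschitz functions
`φ i` vanishing at `0`, the Rademacher average (over signs `σ ∈ {-1,1}ⁿ`) of the
supremum of `|(1/n) ∑ σ i * φ i (t i) * α i|` over `t ∈ T` and binary selectors
`α ∈ A ⊆ {0,1}ⁿ` is bounded (up to a factor `2L`) by that of the identity. -/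
theorem stmt_2 (n : ℕ) (hn : 1 ≤ n) (L : ℝ) (hL : 0 ≤ L)
    (φ : Fin n → ℝ → ℝ)
    (hlip : ∀ i, ∀ a b : ℝ, |φ i a - φ i b| ≤ L * |a - b|)
    (hφ0 : ∀ i, φ i 0 = 0)
    (T : Set (Fin n → ℝ)) (hTne : T.Nonempty) (hTbd : Bornology.IsBounded T)
    (A : Set (Fin n → ℝ)) (hAne : A.Nonempty)
    (hA01 : ∀ α ∈ A, ∀ i, α i = 0 ∨ α i = 1) :
    (1 / 2) * ((2 : ℝ) ^ n)⁻¹ *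
      ∑ σ : Fin n → Bool,
        sSup {x : ℝ | ∃ t ∈ T, ∃ α ∈ A,
          x = |(1 / n : ℝ) * ∑ i, (if σ i then (1 : ℝ) else -1) * φ i (t i) * α i|}
    ≤ L * ((2 : ℝ) ^ n)⁻¹ *
      ∑ σ : Fin n → Bool,
        sSup {x : ℝ | ∃ t ∈ T, ∃ α ∈ A,
          x = |(1 / n : ℝ) * ∑ i, (if σ i then (1 : ℝ) else -1) * t i * α i|} := by
  classical
  obtain ⟨t₀, ht₀⟩ := hTne
  obtain ⟨α₀, hα₀⟩ := hAne
  obtain ⟨R, hR⟩ := hTbd.exists_norm_le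
  set Rb : ℝ := max R 0 with hRbdef
  have hRb0 : (0:ℝ) ≤ Rb := le_max_right _ _
  set U := {p : (Fin n → ℝ) × (Fin n → ℝ) // p.1 ∈ T ∧ p.2 ∈ A} with hUdef
  haveI hUne : Nonempty U := ⟨⟨(t₀, α₀), ht₀, hα₀⟩⟩
  have hn0 : (0:ℝ) ≤ 1 / n := by positivity
  have hn1 : (1 / n : ℝ) ≤ 1 := by
    rw [div_le_one (by exact_mod_cast hn : (0:ℝ) < n)]
    exact_mod_cast hn
  have htb : ∀ u : U, ∀ i, |u.1.1 i| ≤ Rb := by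
    intro u i
    have h1 := norm_le_pi_norm u.1.1 i
    rw [Real.norm_eq_abs] at h1
    exact le_trans h1 (le_trans (hR u.1.1 u.2.1) (le_max_left _ _))
  have hab : ∀ u : U, ∀ i, 0 ≤ u.1.2 i ∧ u.1.2 i ≤ 1 := by
    intro u i
    rcases hA01 u.1.2 u.2.2 i with h | h <;> rw [h] <;> norm_num
  have habs : ∀ u : U, ∀ i, |u.1.2 i| ≤ 1 := fun u i => by
    rw [abs_of_nonneg (hab u i).1]; exact (hab u i).2
  have hφb : ∀ i x, |φ i x| ≤ L * |x| := by
    intro i x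
    have h := hlip i x 0
    rwa [hφ0 i, sub_zero, sub_zero] at h
  set ψ : Fin n → U → ℝ := fun i u => (1 / n : ℝ) * φ i (u.1.1 i) * u.1.2 i with hψdef
  set idf : Fin n → U → ℝ := fun i u => (1 / n : ℝ) * u.1.1 i * u.1.2 i with hidfdef
  set g : Fin n → U → ℝ := fun i u => L * idf i u with hgdef
  have hgC : ∀ i (u : U), |g i u| ≤ L * Rb := by
    intro i u
    calc |g i u| = L * ((1/n : ℝ) * |u.1.1 i| * |u.1.2 i|) := by
          show |L * ((1/n : ℝ) * u.1.1 i * u.1.2 i)| = _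
          rw [abs_mul, abs_mul, abs_mul, abs_of_nonneg hL, abs_of_nonneg hn0]
      _ ≤ L * (1 * Rb * 1) := by
          apply mul_le_mul_of_nonneg_left _ hL
          apply mul_le_mul (mul_le_mul hn1 (htb u i) (abs_nonneg _) (by norm_num))
            (habs u i) (abs_nonneg _) (by positivity)
      _ = L * Rb := by ring
  have h1 : ∀ i (u : U), |ψ i u| ≤ |g i u| := by
    intro i u
    calc |ψ i u| = (1/n : ℝ) * |φ i (u.1.1 i)| * |u.1.2 i| := by
          show |(1/n : ℝ) * φ i (u.1.1 i) * u.1.2 i| = _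
          rw [abs_mul, abs_mul, abs_of_nonneg hn0]
      _ ≤ (1/n : ℝ) * (L * |u.1.1 i|) * |u.1.2 i| := by
          apply mul_le_mul_of_nonneg_right _ (abs_nonneg _)
          exact mul_le_mul_of_nonneg_left (hφb i _) hn0
      _ = |L * ((1/n : ℝ) * u.1.1 i * u.1.2 i)| := by
          rw [abs_mul, abs_mul, abs_mul, abs_of_nonneg hL, abs_of_nonneg hn0]
          ring
      _ = |g i u| := rfl
  have hψC : ∀ i (u : U), |ψ i u| ≤ L * Rb := fun i u => le_trans (h1 i u) (hgC i u)
  have h2 : ∀ i (u v : U), |ψ i u - ψ i v| ≤ |g i u - g i v| := by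
    intro i u v
    have e1 : ψ i u - ψ i v
        = (1/n : ℝ) * (φ i (u.1.1 i) * u.1.2 i - φ i (v.1.1 i) * v.1.2 i) := by
      show (1/n : ℝ) * φ i (u.1.1 i) * u.1.2 i - (1/n : ℝ) * φ i (v.1.1 i) * v.1.2 i = _
      ring
    have e2 : g i u - g i v
        = (1/n : ℝ) * (L * (u.1.1 i * u.1.2 i) - L * (v.1.1 i * v.1.2 i)) := by
      show L * ((1/n : ℝ) * u.1.1 i * u.1.2 i) - L * ((1/n : ℝ) * v.1.1 i * v.1.2 i) = _
      ring
    rw [e1, e2, abs_mul, abs_mul]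
    apply mul_le_mul_of_nonneg_left _ (abs_nonneg _)
    rcases hA01 u.1.2 u.2.2 i with hα | hα <;> rcases hA01 v.1.2 v.2.2 i with hβ | hβ <;>
        rw [hα, hβ]
    · simp
    · simp only [mul_zero, mul_one, zero_sub, abs_neg]
      calc |φ i (v.1.1 i)| ≤ L * |v.1.1 i| := hφb i _
        _ = |L * v.1.1 i| := by rw [abs_mul, abs_of_nonneg hL]
    · simp only [mul_zero, mul_one, sub_zero]
      calc |φ i (u.1.1 i)| ≤ L * |u.1.1 i| := hφb i _
        _ = |L * u.1.1 i| := by rw [abs_mul, abs_of_nonneg hL]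
    · simp only [mul_one]
      calc |φ i (u.1.1 i) - φ i (v.1.1 i)| ≤ L * |u.1.1 i - v.1.1 i| := hlip i _ _
        _ = |L * u.1.1 i - L * v.1.1 i| := by rw [← mul_sub, abs_mul, abs_of_nonneg hL]
  have hidfC : ∀ i (u : U), |idf i u| ≤ Rb := by
    intro i u
    calc |idf i u| = (1/n : ℝ) * |u.1.1 i| * |u.1.2 i| := by
          show |(1/n : ℝ) * u.1.1 i * u.1.2 i| = _
          rw [abs_mul, abs_mul, abs_of_nonneg hn0]
      _ ≤ 1 * Rb * 1 :=
          mul_le_mul (mul_le_mul hn1 (htb u i) (abs_nonneg _) (by norm_num))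
            (habs u i) (abs_nonneg _) (by positivity)
      _ = Rb := by ring
  -- bounds on signed sums
  have hsumb : ∀ (h : Fin n → U → ℝ) (D : ℝ), (∀ i u, |h i u| ≤ D) →
      ∀ (σ : Fin n → Bool) (u : U),
        |∑ i, (if σ i then (1:ℝ) else -1) * h i u| ≤ n * D := by
    intro h D hD σ u
    refine le_trans (Finset.abs_sum_le_sum_abs _ _) ?_
    have : ∀ i ∈ Finset.univ, |(if σ i then (1:ℝ) else -1) * h i u| ≤ D := by
      intro i _
      rw [abs_mul, sg_abs, one_mul]
      exact hD i u
    refine le_trans (Finset.sum_le_sum this) ?_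
    rw [Finset.sum_const, Finset.card_univ, Fintype.card_fin, nsmul_eq_mul]
  -- set rewriting
  have hset : ∀ (e : (Fin n → ℝ) → (Fin n → ℝ) → ℝ),
      {x : ℝ | ∃ t ∈ T, ∃ α ∈ A, x = e t α} = Set.range (fun u : U => e u.1.1 u.1.2) := by
    intro e
    ext x
    simp only [Set.mem_setOf_eq, Set.mem_range]
    constructor
    · rintro ⟨t, ht, α, hα, rfl⟩
      exact ⟨⟨(t, α), ht, hα⟩, rfl⟩
    · rintro ⟨⟨⟨t, α⟩, ht, hα⟩, rfl⟩
      exact ⟨t, ht, α, hα, rfl⟩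
  have hφconv : ∀ (σ : Fin n → Bool),
      (fun u : U => |(1 / n : ℝ) * ∑ i, (if σ i then (1:ℝ) else -1) * φ i (u.1.1 i) * u.1.2 i|)
      = fun u : U => |∑ i, (if σ i then (1:ℝ) else -1) * ψ i u| := by
    intro σ
    funext u
    congr 1
    rw [Finset.mul_sum]
    refine Finset.sum_congr rfl fun i _ => ?_
    show (1/n : ℝ) * ((if σ i then (1:ℝ) else -1) * φ i (u.1.1 i) * u.1.2 i)
        = (if σ i then (1:ℝ) else -1) * ((1/n : ℝ) * φ i (u.1.1 i) * u.1.2 i)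
    ring
  have hidconv : ∀ (σ : Fin n → Bool),
      (fun u : U => |(1 / n : ℝ) * ∑ i, (if σ i then (1:ℝ) else -1) * u.1.1 i * u.1.2 i|)
      = fun u : U => |∑ i, (if σ i then (1:ℝ) else -1) * idf i u| := by
    intro σ
    funext u
    congr 1
    rw [Finset.mul_sum]
    refine Finset.sum_congr rfl fun i _ => ?_
    show (1/n : ℝ) * ((if σ i then (1:ℝ) else -1) * u.1.1 i * u.1.2 i)
        = (if σ i then (1:ℝ) else -1) * ((1/n : ℝ) * u.1.1 i * u.1.2 i)
    ring
  set P : (Fin n → Bool) → ℝ := fun σ =>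
    max (sSup (Set.range fun u : U => ∑ i, (if σ i then (1:ℝ) else -1) * ψ i u)) 0 with hPdef
  set Pg : (Fin n → Bool) → ℝ := fun σ =>
    max (sSup (Set.range fun u : U => ∑ i, (if σ i then (1:ℝ) else -1) * g i u)) 0 with hPgdef
  set Sid : (Fin n → Bool) → ℝ := fun σ =>
    sSup {x : ℝ | ∃ t ∈ T, ∃ α ∈ A,
      x = |(1 / n : ℝ) * ∑ i, (if σ i then (1 : ℝ) else -1) * t i * α i|} with hSiddef
  set Sφ : (Fin n → Bool) → ℝ := fun σ =>
    sSup {x : ℝ | ∃ t ∈ T, ∃ α ∈ A,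
      x = |(1 / n : ℝ) * ∑ i, (if σ i then (1 : ℝ) else -1) * φ i (t i) * α i|} with hSφdef
  -- step 1 : Sφ σ ≤ P σ + P (!σ)
  have step1 : ∀ σ : Fin n → Bool, Sφ σ ≤ P σ + P (fun i => !σ i) := by
    intro σ
    have hrw : Sφ σ = sSup (Set.range fun u : U => |∑ i, (if σ i then (1:ℝ) else -1) * ψ i u|) := by
      rw [hSφdef]
      dsimp only
      rw [hset (fun t α => |(1 / n : ℝ) * ∑ i, (if σ i then (1:ℝ) else -1) * φ i (t i) * α i|)]
      rw [hφconv σ]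
    rw [hrw]
    apply csSup_le (Set.range_nonempty _)
    rintro x ⟨u, rfl⟩
    show |∑ i, (if σ i then (1:ℝ) else -1) * ψ i u| ≤ _
    have hb1 : BddAbove (Set.range fun u : U => ∑ i, (if σ i then (1:ℝ) else -1) * ψ i u) :=
      bddr _ (n * (L * Rb)) fun u => le_trans (le_abs_self _) (hsumb ψ _ hψC σ u)
    have hb2 : BddAbove (Set.range fun u : U =>
        ∑ i, (if (fun i => !σ i) i then (1:ℝ) else -1) * ψ i u) :=
      bddr _ (n * (L * Rb)) fun u => le_trans (le_abs_self _) (hsumb ψ _ hψC _ u)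
    have hle1 : ∑ i, (if σ i then (1:ℝ) else -1) * ψ i u
        ≤ sSup (Set.range fun u : U => ∑ i, (if σ i then (1:ℝ) else -1) * ψ i u) :=
      le_csSup hb1 ⟨u, rfl⟩
    have hle2 : ∑ i, (if !σ i then (1:ℝ) else -1) * ψ i u
        ≤ sSup (Set.range fun u : U => ∑ i, (if !σ i then (1:ℝ) else -1) * ψ i u) :=
      le_csSup hb2 ⟨u, rfl⟩
    have hneg : ∑ i, (if !σ i then (1:ℝ) else -1) * ψ i u
        = -∑ i, (if σ i then (1:ℝ) else -1) * ψ i u := by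
      rw [← Finset.sum_neg_distrib]
      exact Finset.sum_congr rfl fun i _ => by rw [sg_flip (σ i), neg_mul]
    have hP1 : sSup (Set.range fun u : U => ∑ i, (if σ i then (1:ℝ) else -1) * ψ i u) ≤ P σ :=
      le_max_left _ _
    have hP2 : sSup (Set.range fun u : U => ∑ i, (if !σ i then (1:ℝ) else -1) * ψ i u)
        ≤ P (fun i => !σ i) := le_max_left _ _
    have hP10 : (0:ℝ) ≤ P σ := le_max_right _ _
    have hP20 : (0:ℝ) ≤ P (fun i => !σ i) := le_max_right _ _
    rcases abs_cases (∑ i, (if σ i then (1:ℝ) else -1) * ψ i u) with ⟨h, _⟩ | ⟨h, _⟩ <;>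
      rw [h] <;> linarith
  -- step 2 : sum over negated signs
  have hnegsum : ∑ σ : Fin n → Bool, P (fun i => !σ i) = ∑ σ : Fin n → Bool, P σ := by
    have hinv : Function.Involutive (fun σ : Fin n → Bool => fun i => !σ i) := by
      intro σ; funext i; simp
    exact Equiv.sum_comp (Function.Involutive.toPerm _ hinv) P
  -- step 3 : contraction
  have step3 : ∑ σ : Fin n → Bool, P σ ≤ ∑ σ : Fin n → Bool, Pg σ :=
    contraction ψ g (L * Rb) hψC hgC h1 h2
  -- step 4 : Pg σ ≤ L * Sid σ
  have step4 : ∀ σ : Fin n → Bool, Pg σ ≤ L * Sid σ := by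
    intro σ
    have hrw : Sid σ = sSup (Set.range fun u : U => |∑ i, (if σ i then (1:ℝ) else -1) * idf i u|) := by
      rw [hSiddef]
      dsimp only
      rw [hset (fun t α => |(1 / n : ℝ) * ∑ i, (if σ i then (1:ℝ) else -1) * t i * α i|)]
      rw [hidconv σ]
    have habsid : BddAbove (Set.range fun u : U =>
        |∑ i, (if σ i then (1:ℝ) else -1) * idf i u|) :=
      bddr _ (n * Rb) fun u => hsumb idf _ hidfC σ u
    have hgeq : (fun u : U => ∑ i, (if σ i then (1:ℝ) else -1) * g i u)
        = fun u : U => L * ∑ i, (if σ i then (1:ℝ) else -1) * idf i u := by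
      funext u
      rw [Finset.mul_sum]
      refine Finset.sum_congr rfl fun i _ => ?_
      show (if σ i then (1:ℝ) else -1) * (L * idf i u) = L * ((if σ i then (1:ℝ) else -1) * idf i u)
      ring
    have hgabs : (fun u : U => |∑ i, (if σ i then (1:ℝ) else -1) * g i u|)
        = fun u : U => L * |∑ i, (if σ i then (1:ℝ) else -1) * idf i u| := by
      funext u
      rw [congrFun hgeq u, abs_mul, abs_of_nonneg hL]
    have hfact : sSup (Set.range fun u : U => |∑ i, (if σ i then (1:ℝ) else -1) * g i u|)
        = L * Sid σ := by
      rw [hgabs, hrw]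
      exact sSup_range_mul L hL _ (n * Rb) (fun u => by
        rw [abs_abs]; exact hsumb idf _ hidfC σ u)
    rw [hPdef] at *
    show max (sSup (Set.range fun u : U => ∑ i, (if σ i then (1:ℝ) else -1) * g i u)) 0 ≤ L * Sid σ
    rw [← hfact]
    apply max_le
    · apply csSup_le (Set.range_nonempty _)
      rintro x ⟨u, rfl⟩
      show ∑ i, (if σ i then (1:ℝ) else -1) * g i u ≤ _
      refine le_trans (le_abs_self _) (le_csSup ?_ ⟨u, rfl⟩)
      refine bddr _ (L * (n * Rb)) fun u => ?_
      rw [congrFun hgabs u]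
      exact mul_le_mul_of_nonneg_left (hsumb idf _ hidfC σ u) hL
    · apply Real.sSup_nonneg
      rintro x ⟨u, rfl⟩
      exact abs_nonneg _
  -- assemble
  have main : ∑ σ : Fin n → Bool, Sφ σ ≤ 2 * L * ∑ σ : Fin n → Bool, Sid σ := by
    calc ∑ σ : Fin n → Bool, Sφ σ
        ≤ ∑ σ : Fin n → Bool, (P σ + P (fun i => !σ i)) :=
          Finset.sum_le_sum fun σ _ => step1 σ
      _ = ∑ σ : Fin n → Bool, P σ + ∑ σ : Fin n → Bool, P (fun i => !σ i) :=
          Finset.sum_add_distrib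
      _ = 2 * ∑ σ : Fin n → Bool, P σ := by rw [hnegsum]; ring
      _ ≤ 2 * ∑ σ : Fin n → Bool, Pg σ := by linarith [step3]
      _ ≤ 2 * ∑ σ : Fin n → Bool, (L * Sid σ) := by
          have : ∑ σ : Fin n → Bool, Pg σ ≤ ∑ σ : Fin n → Bool, (L * Sid σ) :=
            Finset.sum_le_sum fun σ _ => step4 σ
          linarith [this]
      _ = 2 * L * ∑ σ : Fin n → Bool, Sid σ := by rw [← Finset.mul_sum]; ring
  have hc : (0:ℝ) ≤ (1 / 2) * ((2 : ℝ) ^ n)⁻¹ := by positivity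
  calc (1 / 2) * ((2 : ℝ) ^ n)⁻¹ * ∑ σ : Fin n → Bool, Sφ σ
      ≤ (1 / 2) * ((2 : ℝ) ^ n)⁻¹ * (2 * L * ∑ σ : Fin n → Bool, Sid σ) :=
        mul_le_mul_of_nonneg_left main hc
    _ = L * ((2 : ℝ) ^ n)⁻¹ * ∑ σ : Fin n → Bool, Sid σ := by ring
end

section
/- Let L ≥ 0 and let φ : ℝ → ℝ be an L-Lipschitz function with φ(0) = 0. Let T ⊆ ℝ² be a nonempty bounded set and let A ⊆ {0,1}² be nonempty. Then sup_{t ∈ T, α ∈ A} (α₁·t₁ + φ(t₂)·α₂) + sup_{t ∈ T, α ∈ A} (α₁·t₁ − φ(t₂)·α₂) ≤ sup_{t ∈ T, α ∈ A} (α₁·t₁ + L·t₂·α₂) + sup_{t ∈ T, α ∈ A} (α₁·t₁ − L·t₂·α₂). -/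
/-- Two-coordinate comparison step of the extended Ledoux–Talagrand contraction
inequality: for an `L`-Lipschitz `φ` with `φ 0 = 0`, bounded nonempty `T ⊆ ℝ²`
and nonempty `A ⊆ {0,1}²`. -/
theorem stmt_3 (L : ℝ) (hL : 0 ≤ L) (φ : ℝ → ℝ)
    (hlip : ∀ a b : ℝ, |φ a - φ b| ≤ L * |a - b|) (hφ0 : φ 0 = 0)
    (T : Set (ℝ × ℝ)) (hTne : T.Nonempty) (hTbd : Bornology.IsBounded T)
    (A : Set (ℝ × ℝ)) (hAne : A.Nonempty)
    (hA01 : ∀ α ∈ A, (α.1 = 0 ∨ α.1 = 1) ∧ (α.2 = 0 ∨ α.2 = 1)) :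
    sSup {x : ℝ | ∃ t ∈ T, ∃ α ∈ A, x = α.1 * t.1 + φ t.2 * α.2}
      + sSup {x : ℝ | ∃ t ∈ T, ∃ α ∈ A, x = α.1 * t.1 - φ t.2 * α.2}
    ≤ sSup {x : ℝ | ∃ t ∈ T, ∃ α ∈ A, x = α.1 * t.1 + L * t.2 * α.2}
      + sSup {x : ℝ | ∃ t ∈ T, ∃ α ∈ A, x = α.1 * t.1 - L * t.2 * α.2} := by
  obtain ⟨M, hM⟩ := hTbd.exists_norm_le
  set S1 := {x : ℝ | ∃ t ∈ T, ∃ α ∈ A, x = α.1 * t.1 + φ t.2 * α.2} with hS1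
  set S2 := {x : ℝ | ∃ t ∈ T, ∃ α ∈ A, x = α.1 * t.1 - φ t.2 * α.2} with hS2
  set S3 := {x : ℝ | ∃ t ∈ T, ∃ α ∈ A, x = α.1 * t.1 + L * t.2 * α.2} with hS3
  set S4 := {x : ℝ | ∃ t ∈ T, ∃ α ∈ A, x = α.1 * t.1 - L * t.2 * α.2} with hS4
  -- basic bounds
  have hcoord : ∀ t ∈ T, |t.1| ≤ M ∧ |t.2| ≤ M := by
    intro t ht
    have := hM t ht
    rw [Prod.norm_def] at this
    constructor
    · exact le_trans (le_max_left _ _) this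
    · exact le_trans (le_max_right _ _) this
  have hphi : ∀ r : ℝ, |φ r| ≤ L * |r| := by
    intro r
    have := hlip r 0
    simpa [hφ0] using this
  have hbd : ∀ (c : ℝ), (∀ t ∈ T, ∀ α ∈ A, α.1 * t.1 + c * t.2 * α.2 ≤ M + L * M) →
      True := fun _ _ => trivial
  -- generic bounding of terms
  have hterm : ∀ t ∈ T, ∀ α ∈ A, ∀ (f : ℝ → ℝ), (∀ r, |f r| ≤ L * |r|) →
      α.1 * t.1 + f t.2 * α.2 ≤ M + L * M := by
    intro t ht α hα f hf
    obtain ⟨h1, h2⟩ := hcoord t ht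
    obtain ⟨ha1, ha2⟩ := hA01 α hα
    have hf2 := hf t.2
    have habs1 := abs_le.mp h1
    have habs2 := abs_le.mp h2
    have hfa := abs_le.mp (le_trans hf2 (by nlinarith [abs_le.mp h2] : L * |t.2| ≤ L * M))
    rcases ha1 with h|h <;> rcases ha2 with h'|h' <;> rw [h, h'] <;> nlinarith
  have bdd3 : BddAbove S3 := by
    refine ⟨M + L * M, fun x hx => ?_⟩
    obtain ⟨t, ht, α, hα, rfl⟩ := hx
    exact hterm t ht α hα (fun r => L * r) (fun r => by
      rw [abs_mul, abs_of_nonneg hL]) 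
  have bdd4 : BddAbove S4 := by
    refine ⟨M + L * M, fun x hx => ?_⟩
    obtain ⟨t, ht, α, hα, rfl⟩ := hx
    have := hterm t ht α hα (fun r => -(L * r)) (fun r => by
      rw [abs_neg, abs_mul, abs_of_nonneg hL])
    simpa [sub_eq_add_neg, neg_mul] using this
  -- key pointwise inequality
  have key : ∀ x ∈ S1, ∀ y ∈ S2, x + y ≤ sSup S3 + sSup S4 := by
    rintro x ⟨t, ht, α, hα, rfl⟩ y ⟨s, hs, β, hβ, rfl⟩
    have mem3 : ∀ u ∈ T, ∀ γ ∈ A, (γ.1 * u.1 + L * u.2 * γ.2) ≤ sSup S3 := by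
      intro u hu γ hγ
      exact le_csSup bdd3 ⟨u, hu, γ, hγ, rfl⟩
    have mem4 : ∀ u ∈ T, ∀ γ ∈ A, (γ.1 * u.1 - L * u.2 * γ.2) ≤ sSup S4 := by
      intro u hu γ hγ
      exact le_csSup bdd4 ⟨u, hu, γ, hγ, rfl⟩
    obtain ⟨-, ha2⟩ := hA01 α hα
    obtain ⟨-, hb2⟩ := hA01 β hβ
    have hlts := abs_le.mp (hlip t.2 s.2)
    have hlt0 := abs_le.mp (hphi t.2)
    have hls0 := abs_le.mp (hphi s.2)
    rcases ha2 with ha|ha <;> rcases hb2 with hb|hb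
    · have h3 := mem3 t ht α hα
      have h4 := mem4 s hs β hβ
      rw [ha, hb] at *
      linarith
    · -- α₂ = 0, β₂ = 1
      rcases le_or_gt 0 s.2 with hsgn|hsgn
      · have h3 := mem3 s hs β hβ
        have h4 := mem4 t ht α hα
        rw [ha, hb] at *
        rw [abs_of_nonneg hsgn] at hls0
        linarith
      · have h3 := mem3 t ht α hα
        have h4 := mem4 s hs β hβ
        rw [ha, hb] at *
        rw [abs_of_neg hsgn] at hls0
        linarith
    · -- α₂ = 1, β₂ = 0
      rcases le_or_gt 0 t.2 with hsgn|hsgn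
      · have h3 := mem3 t ht α hα
        have h4 := mem4 s hs β hβ
        rw [ha, hb] at *
        rw [abs_of_nonneg hsgn] at hlt0
        linarith
      · have h3 := mem3 s hs β hβ
        have h4 := mem4 t ht α hα
        rw [ha, hb] at *
        rw [abs_of_neg hsgn] at hlt0
        linarith
    · -- both 1
      rcases le_or_gt s.2 t.2 with hsgn|hsgn
      · have h3 := mem3 t ht α hα
        have h4 := mem4 s hs β hβ
        rw [ha, hb] at *
        rw [abs_of_nonneg (by linarith : (0:ℝ) ≤ t.2 - s.2)] at hlts
        linarith
      · have h3 := mem3 s hs β hβ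
        have h4 := mem4 t ht α hα
        rw [ha, hb] at *
        rw [abs_of_neg (by linarith : t.2 - s.2 < 0)] at hlts
        linarith
  -- nonemptiness
  obtain ⟨t0, ht0⟩ := hTne
  obtain ⟨α0, hα0⟩ := hAne
  have hne1 : S1.Nonempty := ⟨_, t0, ht0, α0, hα0, rfl⟩
  have hne2 : S2.Nonempty := ⟨_, t0, ht0, α0, hα0, rfl⟩
  have h1 : sSup S1 ≤ sSup S3 + sSup S4 - sSup S2 := by
    apply csSup_le hne1
    intro x hx
    have h2 : sSup S2 ≤ sSup S3 + sSup S4 - x :=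
      csSup_le hne2 (fun y hy => by linarith [key x hx y hy])
    linarith
  linarith
end

section
/- Let n ≥ 1. For each i ∈ {1,…,n} let A_{i1}, …, A_{in} ∈ {0,1}, let p₁, …, pₙ ∈ {0,1}, and set Nᵢ = ∑_{k=1}^{n} A_{ik} and Sᵢ = ∑_{k=1}^{n} A_{ik}·p_k (so Sᵢ ≤ Nᵢ). For each i and each integer h with 0 ≤ h ≤ Nᵢ, define t¹_{ih} = 1{Sᵢ ≥ h}, t²_{ih} = 1{Sᵢ ≤ h}, and u_{ih} = pᵢ·t¹_{ih}·t²_{ih}. Then: (a) (t¹_{ih}, t²_{ih}, u_{ih}) is the unique triple of {0,1}-valued numbers satisfying the linear constraints (Sᵢ − h)/(Nᵢ + 1) < t¹_{ih} ≤ (Sᵢ − h)/(Nᵢ + 1) + 1, (h − Sᵢ)/(Nᵢ + 1) < t²_{ih} ≤ (h − Sᵢ)/(Nᵢ + 1) + 1, and (pᵢ + t¹_{ih} + t²_{ih})/3 − 1 < u_{ih} ≤ (pᵢ + t¹_{ih} + t²_{ih})/3; and (b) for any functions gᵢ : {0,1} × ℕ → ℝ, (1/n)·∑_{i=1}^{n}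 ∑_{h=0}^{Nᵢ} [ (gᵢ(1,h) − gᵢ(0,h))·u_{ih} + gᵢ(0,h)·(t¹_{ih} + t²_{ih} − 1) ] = (1/n)·∑_{i=1}^{n} gᵢ(pᵢ, Sᵢ). -/
/-!
Each constraint pair `x / M < t ≤ x / M + 1` with `-M ≤ x < M` forces a binary `t` to be the
indicator of `0 ≤ x`, and the pair `(a + b + c) / 3 - 1 < u ≤ (a + b + c) / 3` forces a binary
`u` to be the product `a * b * c`. In the objective, `t¹ + t² - 1` and `t¹ t²` both reduce to
the indicator of `h = Sᵢ`, so the inner sum over `h ≤ Nᵢ` collapses to its `h = Sᵢ` term,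
`(gᵢ(1, Sᵢ) - gᵢ(0, Sᵢ)) pᵢ + gᵢ(0, Sᵢ) = gᵢ(pᵢ, Sᵢ)`.
-/

open Finset

lemma div_lt_and_le_div_add_one_iff_eq_ite {x M t : ℝ} (hM : 0 < M) (hlo : -M ≤ x)
    (hhi : x < M) (ht : t = 0 ∨ t = 1) :
    (x / M < t ∧ t ≤ x / M + 1) ↔ t = if 0 ≤ x then 1 else 0 := by
  have hlt : x / M < 1 := (div_lt_one hM).2 hhi
  have hge : -1 ≤ x / M := (le_div_iff₀ hM).2 (by linarith)
  by_cases hx : 0 ≤ x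
  · have : 0 ≤ x / M := div_nonneg hx hM.le
    rw [if_pos hx]
    rcases ht with rfl | rfl
    · exact iff_of_false (fun h => by linarith [h.1]) (by norm_num)
    · exact iff_of_true ⟨hlt, by linarith⟩ rfl
  · have : x / M < 0 := div_neg_of_neg_of_pos (not_le.1 hx) hM
    rw [if_neg hx]
    rcases ht with rfl | rfl
    · exact iff_of_true ⟨this, by linarith⟩ rfl
    · exact iff_of_false (fun h => by linarith [h.2]) (by norm_num)

lemma avg_sub_one_lt_and_le_avg_iff_eq_mul_mul {a b c u : ℝ} (ha : a = 0 ∨ a = 1)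
    (hb : b = 0 ∨ b = 1) (hc : c = 0 ∨ c = 1) (hu : u = 0 ∨ u = 1) :
    ((a + b + c) / 3 - 1 < u ∧ u ≤ (a + b + c) / 3) ↔ u = a * b * c := by
  rcases ha with rfl | rfl <;> rcases hb with rfl | rfl <;> rcases hc with rfl | rfl <;>
    rcases hu with rfl | rfl <;> norm_num

section Indicators

variable {α R : Type*} [LinearOrder α] [Ring R] (a b : α)

lemma ite_le_mul_ite_ge :
    ((if a ≤ b then 1 else 0) * (if b ≤ a then 1 else 0) : R) = if a = b then 1 else 0 := by
  rcases lt_trichotomy a b with h | rfl | h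
  · simp [h.le, not_le.2 h, h.ne]
  · simp
  · simp [h.le, not_le.2 h, h.ne']

lemma ite_le_add_ite_ge_sub_one :
    ((if a ≤ b then 1 else 0) + (if b ≤ a then 1 else 0) - 1 : R) = if a = b then 1 else 0 := by
  rcases lt_trichotomy a b with h | rfl | h
  · simp [h.le, not_le.2 h, h.ne]
  · simp
  · simp [h.le, not_le.2 h, h.ne']

end Indicators

lemma sub_mul_add_eq_of_binary {R : Type*} [Ring R] (f : ℕ → R) {p : ℕ}
    (hp : p = 0 ∨ p = 1) :
    (f 1 - f 0) * p + f 0 = f p := by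
  rcases hp with rfl | rfl <;> simp

lemma constraints_iff_eq_indicators {s h m : ℕ} {q t1 t2 u : ℝ} (hs : s ≤ m) (hh : h ≤ m)
    (hq : q = 0 ∨ q = 1) (ht1 : t1 = 0 ∨ t1 = 1) (ht2 : t2 = 0 ∨ t2 = 1)
    (hu : u = 0 ∨ u = 1) :
    (((s : ℝ) - h) / (m + 1) < t1 ∧ t1 ≤ ((s : ℝ) - h) / (m + 1) + 1 ∧
      ((h : ℝ) - s) / (m + 1) < t2 ∧ t2 ≤ ((h : ℝ) - s) / (m + 1) + 1 ∧
      (q + t1 + t2) / 3 - 1 < u ∧ u ≤ (q + t1 + t2) / 3) ↔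
    (t1 = (if h ≤ s then 1 else 0) ∧ t2 = (if s ≤ h then 1 else 0) ∧
      u = q * (if h ≤ s then 1 else 0) * (if s ≤ h then 1 else 0)) := by
  have hM : (0 : ℝ) < m + 1 := by positivity
  have hs' : (s : ℝ) ≤ m := by exact_mod_cast hs
  have hh' : (h : ℝ) ≤ m := by exact_mod_cast hh
  have key1 :=
    div_lt_and_le_div_add_one_iff_eq_ite (x := s - h) hM (by linarith) (by linarith) ht1
  have key2 :=
    div_lt_and_le_div_add_one_iff_eq_ite (x := h - s) hM (by linarith) (by linarith) ht2
  have key3 := avg_sub_one_lt_and_le_avg_iff_eq_mul_mul hq ht1 ht2 hu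
  simp only [sub_nonneg, Nat.cast_le] at key1 key2
  constructor
  · rintro ⟨c1, c2, c3, c4, c5, c6⟩
    obtain rfl := key1.1 ⟨c1, c2⟩
    obtain rfl := key2.1 ⟨c3, c4⟩
    exact ⟨rfl, rfl, key3.1 ⟨c5, c6⟩⟩
  · rintro ⟨rfl, rfl, rfl⟩
    exact ⟨(key1.2 rfl).1, (key1.2 rfl).2, (key2.2 rfl).1, (key2.2 rfl).2, key3.2 rfl⟩

lemma sum_range_objective_eq {s m q : ℕ} (hs : s ≤ m) (hq : q = 0 ∨ q = 1)
    (f : ℕ → ℕ → ℝ) :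
    ∑ h ∈ range (m + 1), ((f 1 h - f 0 h) * (q * (if h ≤ s then 1 else 0) *
        (if s ≤ h then 1 else 0)) +
      f 0 h * ((if h ≤ s then 1 else 0) + (if s ≤ h then 1 else 0) - 1)) = f q s := by
  calc _ = ∑ h ∈ range (m + 1), if h = s then (f 1 h - f 0 h) * q + f 0 h else 0 :=
        sum_congr rfl fun h _ => by
          rw [mul_assoc, ite_le_mul_ite_ge, ite_le_add_ite_ge_sub_one]
          split_ifs <;> simp
    _ = (f 1 s - f 0 s) * q + f 0 s := by
        rw [sum_ite_eq', if_pos (mem_range.2 (Nat.lt_succ_of_le hs))]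
    _ = f q s := sub_mul_add_eq_of_binary (f · s) hq

theorem stmt_12_general (n : ℕ)
    (A : Fin n → Fin n → ℕ)
    (p : Fin n → ℕ) (hp : ∀ i, p i = 0 ∨ p i = 1)
    (N S : Fin n → ℕ)
    (hN : ∀ i, N i = ∑ k, A i k)
    (hS : ∀ i, S i = ∑ k, A i k * p k)
    (T1 T2 U : Fin n → ℕ → ℝ)
    (hT1 : ∀ i h, T1 i h = if h ≤ S i then 1 else 0)
    (hT2 : ∀ i h, T2 i h = if S i ≤ h then 1 else 0)
    (hU : ∀ i h, U i h = (p i : ℝ) * T1 i h * T2 i h) :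
    (∀ i : Fin n, ∀ h : ℕ, h ≤ N i →
      ∀ t1 t2 u : ℝ, (t1 = 0 ∨ t1 = 1) → (t2 = 0 ∨ t2 = 1) → (u = 0 ∨ u = 1) →
        ((((S i : ℝ) - (h : ℝ)) / ((N i : ℝ) + 1) < t1 ∧
            t1 ≤ ((S i : ℝ) - (h : ℝ)) / ((N i : ℝ) + 1) + 1 ∧
            ((h : ℝ) - (S i : ℝ)) / ((N i : ℝ) + 1) < t2 ∧
            t2 ≤ ((h : ℝ) - (S i : ℝ)) / ((N i : ℝ) + 1) + 1 ∧
            ((p i : ℝ) + t1 + t2) / 3 - 1 < u ∧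
            u ≤ ((p i : ℝ) + t1 + t2) / 3)
          ↔ (t1 = T1 i h ∧ t2 = T2 i h ∧ u = U i h))) ∧
    (∀ g : Fin n → ℕ → ℕ → ℝ,
      (1 / n : ℝ) * ∑ i, ∑ h ∈ Finset.range (N i + 1),
        ((g i 1 h - g i 0 h) * U i h + g i 0 h * (T1 i h + T2 i h - 1))
      = (1 / n : ℝ) * ∑ i, g i (p i) (S i)) := by
  have hSN : ∀ i, S i ≤ N i := fun i => by
    rw [hS, hN]
    exact sum_le_sum fun k _ => mul_le_of_le_one_right' ((hp k).elim (by omega) (·.le))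
  refine ⟨fun i h hh t1 t2 u ht1 ht2 hu => ?_, fun g => ?_⟩
  · simp only [hU, hT1, hT2]
    exact constraints_iff_eq_indicators (hSN i) hh
      ((hp i).imp (by simp [·]) (by simp [·])) ht1 ht2 hu
  · simp only [hU, hT1, hT2, fun i => sum_range_objective_eq (hSN i) (hp i) (g i)]

/-- MILP reformulation of empirical welfare maximization under network
interference: (a) the binary variables `t¹, t², u` are uniquely pinned down by
the linear constraints and equal the indicators `1{Sᵢ ≥ h}`, `1{Sᵢ ≤ h}` and the
product `pᵢ·t¹·t²`; (b) the MILP objective evaluated at these variables equals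
the empirical welfare `(1/n) ∑ᵢ gᵢ(pᵢ, Sᵢ)`. -/
theorem stmt_12 (n : ℕ) (hn : 1 ≤ n)
    (A : Fin n → Fin n → ℕ) (hA : ∀ i k, A i k = 0 ∨ A i k = 1)
    (p : Fin n → ℕ) (hp : ∀ i, p i = 0 ∨ p i = 1)
    (N S : Fin n → ℕ)
    (hN : ∀ i, N i = ∑ k, A i k)
    (hS : ∀ i, S i = ∑ k, A i k * p k)
    (T1 T2 U : Fin n → ℕ → ℝ)
    (hT1 : ∀ i h, T1 i h = if h ≤ S i then 1 else 0)
    (hT2 : ∀ i h, T2 i h = if S i ≤ h then 1 else 0)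
    (hU : ∀ i h, U i h = (p i : ℝ) * T1 i h * T2 i h) :
    (∀ i : Fin n, ∀ h : ℕ, h ≤ N i →
      ∀ t1 t2 u : ℝ, (t1 = 0 ∨ t1 = 1) → (t2 = 0 ∨ t2 = 1) → (u = 0 ∨ u = 1) →
        ((((S i : ℝ) - (h : ℝ)) / ((N i : ℝ) + 1) < t1 ∧
            t1 ≤ ((S i : ℝ) - (h : ℝ)) / ((N i : ℝ) + 1) + 1 ∧
            ((h : ℝ) - (S i : ℝ)) / ((N i : ℝ) + 1) < t2 ∧
            t2 ≤ ((h : ℝ) - (S i : ℝ)) / ((N i : ℝ) + 1) + 1 ∧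
            ((p i : ℝ) + t1 + t2) / 3 - 1 < u ∧
            u ≤ ((p i : ℝ) + t1 + t2) / 3)
          ↔ (t1 = T1 i h ∧ t2 = T2 i h ∧ u = U i h))) ∧
    (∀ g : Fin n → ℕ → ℕ → ℝ,
      (1 / n : ℝ) * ∑ i, ∑ h ∈ Finset.range (N i + 1),
        ((g i 1 h - g i 0 h) * U i h + g i 0 h * (T1 i h + T2 i h - 1))
      = (1 / n : ℝ) * ∑ i, g i (p i) (S i)) :=
  stmt_12_general n A p hp N S hN hS T1 T2 U hT1 hT2 hU
end

section
/- Let δ ∈ (0,1), let I ∈ {0,1}, let e and ê be real numbers with δ ≤ e ≤ 1 and δ ≤ ê ≤ 1, and let Y, m, m̂ be real numbers. Then | (I/ê)·(Y − m̂) + m̂ − ( (I/e)·(Y − m) + m ) | ≤ (1/δ²)·|Y − m|·|e − ê| + (1 + 1/δ)·|m̂ − m|. -/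
/-- Pointwise comparison of AIPW summands with estimated versus pseudo-true
nuisance functions, under strict overlap `δ ≤ e, ê ≤ 1`. -/
theorem stmt_15 (δ : ℝ) (hδ : δ ∈ Set.Ioo (0 : ℝ) 1)
    (I : ℝ) (hI : I = 0 ∨ I = 1)
    (e ehat Y m mhat : ℝ)
    (he : δ ≤ e ∧ e ≤ 1) (hehat : δ ≤ ehat ∧ ehat ≤ 1) :
    |(I / ehat) * (Y - mhat) + mhat - ((I / e) * (Y - m) + m)|
      ≤ (1 / δ ^ 2) * |Y - m| * |e - ehat| + (1 + 1 / δ) * |mhat - m| := by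
  obtain ⟨hδ0, hδ1⟩ := hδ
  have hδ0' : (0:ℝ) < δ := hδ0
  have he0 : (0:ℝ) < e := lt_of_lt_of_le hδ0 he.1
  have heh0 : (0:ℝ) < ehat := lt_of_lt_of_le hδ0 hehat.1
  rcases hI with h | h
  · subst h
    simp only [zero_div, zero_mul, zero_add]
    have h1 : |mhat - m| ≤ (1 + 1 / δ) * |mhat - m| := by
      nlinarith [abs_nonneg (mhat - m), one_div_pos.mpr hδ0']
    have h2 : 0 ≤ (1 / δ ^ 2) * |Y - m| * |e - ehat| := by
      positivity
    linarith
  · subst h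
    have key : (1 / ehat) * (Y - mhat) + mhat - ((1 / e) * (Y - m) + m)
        = (Y - m) * ((e - ehat) / (e * ehat)) + (1 / ehat) * (m - mhat) + (mhat - m) := by
      field_simp
      ring
    rw [key]
    have habs : |(Y - m) * ((e - ehat) / (e * ehat)) + (1 / ehat) * (m - mhat) + (mhat - m)|
        ≤ |(Y - m) * ((e - ehat) / (e * ehat))| + |(1 / ehat) * (m - mhat)| + |mhat - m| :=
      (abs_add_le _ _).trans (by gcongr; exact abs_add_le _ _)
    have h1 : |(Y - m) * ((e - ehat) / (e * ehat))| ≤ (1 / δ ^ 2) * |Y - m| * |e - ehat| := by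
      rw [abs_mul, abs_div, abs_mul, abs_of_pos he0, abs_of_pos heh0]
      rw [div_eq_mul_inv]
      have hinv : (e * ehat)⁻¹ ≤ (δ ^ 2)⁻¹ := by
        apply inv_anti₀ (by positivity)
        calc δ ^ 2 = δ * δ := sq δ
        _ ≤ e * ehat := by apply mul_le_mul he.1 hehat.1 hδ0.le he0.le
      calc |Y - m| * (|e - ehat| * (e * ehat)⁻¹)
          ≤ |Y - m| * (|e - ehat| * (δ ^ 2)⁻¹) := by gcongr
        _ = 1 / δ ^ 2 * |Y - m| * |e - ehat| := by ring
    have h2 : |(1 / ehat) * (m - mhat)| ≤ (1 / δ) * |mhat - m| := by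
      rw [abs_mul, abs_sub_comm m mhat]
      gcongr
      rw [abs_of_pos (by positivity : (0:ℝ) < 1 / ehat)]
      exact one_div_le_one_div_of_le hδ0 hehat.1
    have h3 : (1 + 1 / δ) * |mhat - m| = |mhat - m| + (1 / δ) * |mhat - m| := by ring
    linarith
end
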